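/- For any connected graph G of order n ≥ 2 and any integer n' ≥ 2, the strong resolving graph of G∘K_{n'} is isomorphic to (G_SR ∘ K_{n'}) ∪ (n − |∂(G)|) disjoint copies of K_{n'}, and consequently dim_s(G∘K_{n'}) = n(n'−1) + dim_s(G). -/

import Mathlib

open SimpleGraph

namespace Paper

variable {α β : Type*}

/-- The lexicographic product of two simple graphs. -/
def lexProd (G : SimpleGraph α) (H : SimpleGraph β) : SimpleGraph (α × β) where
  Adj p q := G.Adj p.1 q.1 ∨ (p.1 = q.1 ∧ H.Adj p.2 q.2)
  symm := ⟨by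
    rintro ⟨a, b⟩ ⟨c, d⟩ (h | ⟨h1, h2⟩)
    · exact Or.inl h.symm
    · exact Or.inr ⟨h1.symm, h2.symm⟩⟩
  loopless := ⟨by
    rintro ⟨a, b⟩ (h | ⟨h1, h2⟩)
    · exact G.irrefl h
    · exact H.irrefl h2⟩

/-- `u` is maximally distant from `v`. -/
def MaxDistant (G : SimpleGraph α) (u v : α) : Prop :=
  ∀ w, G.Adj u w → G.edist v w ≤ G.edist u v

/-- `u` and `v` are mutually maximally distant. -/
def MMD (G : SimpleGraph α) (u v : α) : Prop :=
  MaxDistant G u v ∧ MaxDistant G v u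

/-- Two vertices are true twins if they have the same closed neighborhood. -/
def TrueTwins (G : SimpleGraph α) (u v : α) : Prop :=
  ∀ w, (G.Adj u w ∨ u = w) ↔ (G.Adj v w ∨ v = w)

/-- The boundary of a graph: vertices belonging to some mutually maximally distant pair. -/
def boundary (G : SimpleGraph α) : Set α := {u | ∃ v, u ≠ v ∧ MMD G u v}

/-- The strong resolving graph of `G`, with vertex set the boundary of `G`. -/
def srGraph (G : SimpleGraph α) : SimpleGraph (boundary G) where
  Adj u v := u.1 ≠ v.1 ∧ MMD G u.1 v.1
  symm := ⟨fun u v h => ⟨h.1.symm, h.2.2, h.2.1⟩⟩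
  loopless := ⟨fun u h => h.1 rfl⟩

/-- The graph `G*`: same vertices, `u ~ v` iff `d_G(u,v) ≥ 2` or `u,v` are true twins. -/
def gstar (G : SimpleGraph α) : SimpleGraph α where
  Adj u v := u ≠ v ∧ (2 ≤ G.edist u v ∨ TrueTwins G u v)
  symm := ⟨by
    rintro u v ⟨h1, (h2 | h2)⟩
    · exact ⟨h1.symm, Or.inl (by rwa [G.edist_comm] at h2)⟩
    · exact ⟨h1.symm, Or.inr fun w => (h2 w).symm⟩⟩
  loopless := ⟨fun u h => h.1 rfl⟩

/-- `G*` with its isolated vertices removed. -/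
def gstarMinus (G : SimpleGraph α) : SimpleGraph {x | ∃ y, (gstar G).Adj x y} :=
  SimpleGraph.induce _ (gstar G)

/-- Disjoint union of two graphs. -/
def disjUnion (G : SimpleGraph α) (H : SimpleGraph β) : SimpleGraph (α ⊕ β) where
  Adj x y := match x, y with
    | Sum.inl a, Sum.inl b => G.Adj a b
    | Sum.inr a, Sum.inr b => H.Adj a b
    | _, _ => False
  symm := ⟨by
    rintro (a | a) (b | b) h <;> simp_all <;> exact h.symm⟩
  loopless := ⟨by
    rintro (a | a) h <;> simp_all⟩

/-- `k` disjoint copies of a graph. -/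
def copies (k : ℕ) (G : SimpleGraph α) : SimpleGraph (Fin k × α) where
  Adj p q := p.1 = q.1 ∧ G.Adj p.2 q.2
  symm := ⟨fun p q h => ⟨h.1.symm, h.2.symm⟩⟩
  loopless := ⟨fun p h => G.irrefl h.2⟩

/-- The join `K₁ + H` of a single vertex with `H`. -/
def joinK1 (H : SimpleGraph β) : SimpleGraph (Unit ⊕ β) where
  Adj x y := match x, y with
    | Sum.inl _, Sum.inl _ => False
    | Sum.inl _, Sum.inr _ => True
    | Sum.inr _, Sum.inl _ => True
    | Sum.inr a, Sum.inr b => H.Adj a b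
  symm := ⟨by
    rintro (a | a) (b | b) h <;> simp_all <;> exact h.symm⟩
  loopless := ⟨by
    rintro (a | a) h <;> simp_all⟩

/-- `w` strongly resolves the pair `u, v`. -/
def StronglyResolves (G : SimpleGraph α) (w u v : α) : Prop :=
  G.edist w u = G.edist w v + G.edist v u ∨ G.edist w v = G.edist w u + G.edist u v

/-- A strong metric generator. -/
def IsStrongGenerator (G : SimpleGraph α) (S : Finset α) : Prop :=
  ∀ u v : α, u ≠ v → ∃ w ∈ S, StronglyResolves G w u v

/-- The strong metric dimension. -/
noncomputable def sdim (G : SimpleGraph α) : ℕ :=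
  sInf {k | ∃ S : Finset α, IsStrongGenerator G S ∧ S.card = k}

/-- A vertex cover. -/
def IsVertexCover (G : SimpleGraph α) (S : Finset α) : Prop :=
  ∀ ⦃u v : α⦄, G.Adj u v → u ∈ S ∨ v ∈ S

/-- The vertex cover number `α(G)`. -/
noncomputable def vcNum (G : SimpleGraph α) : ℕ :=
  sInf {k | ∃ S : Finset α, IsVertexCover G S ∧ S.card = k}

/-- The independence number `β(G)`. -/
noncomputable def indepNum (G : SimpleGraph α) : ℕ :=
  sSup {k | ∃ S : Finset α, (∀ u ∈ S, ∀ v ∈ S, ¬ G.Adj u v) ∧ S.card = k}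


open Finset

/-!
In a connected graph only `u` and `v` strongly resolve a mutually maximally distant pair `u, v`,
while every pair is strongly resolved by both ends of some mutually maximally distant pair; so the
strong metric generators are exactly the sets covering all mutually maximally distant pairs.
In `G ∘ K_{n'}` two vertices of a common fibre are true twins, hence mutually maximally distant,
and two vertices in different fibres are at the `G`-distance of their projections, hence mutually
maximally distant iff their projections are. Thus every vertex of `G ∘ K_{n'}` lies on its
boundary, which gives the isomorphism, and a cover of its mutually maximally distant pairs misses
at most one vertex per fibre and contains the whole fibres over a cover for `G`.
-/

lemma _root_.SimpleGraph.edist_map_le {G : SimpleGraph α} {G' : SimpleGraph β} (f : α → β)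
    (hf : ∀ ⦃x y⦄, G.Adj x y → G'.edist (f x) (f y) ≤ 1) (u v : α) :
    G'.edist (f u) (f v) ≤ G.edist u v := by
  have hwalk : ∀ {x y} (p : G.Walk x y), G'.edist (f x) (f y) ≤ p.length := by
    intro x y p
    induction p with
    | nil => simp
    | @cons x y z h p ih =>
      calc G'.edist (f x) (f z) ≤ G'.edist (f x) (f y) + G'.edist (f y) (f z) :=
            SimpleGraph.edist_triangle
        _ ≤ 1 + p.length := add_le_add (hf h) ih
        _ = (p.cons h).length := by simp [add_comm]
  by_cases huv : G.edist u v = ⊤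
  · exact huv ▸ le_top
  obtain ⟨p, hp⟩ := exists_walk_of_edist_ne_top huv
  exact hp ▸ hwalk p

lemma _root_.SimpleGraph.Connected.exists_adj_dist_lt {G : SimpleGraph α} (hG : G.Connected)
    {u v : α} (h : u ≠ v) : ∃ z, G.Adj u z ∧ G.dist z v < G.dist u v := by
  obtain ⟨p, hp⟩ := hG.exists_walk_length_eq_dist u v
  cases p with
  | nil => exact absurd rfl h
  | cons hz q =>
    refine ⟨_, hz, (dist_le q).trans_lt ?_⟩
    simp [← hp]

section MMD

variable {G : SimpleGraph α} {u v : α}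

lemma MMD.symm (h : MMD G u v) : MMD G v u := ⟨h.2, h.1⟩

lemma MMD.mem_boundary (huv : u ≠ v) (h : MMD G u v) : u ∈ boundary G :=
  ⟨v, huv, h⟩

lemma TrueTwins.mmd (h : TrueTwins G u v) (huv : u ≠ v) : MMD G u v := by
  have key : ∀ {x y}, TrueTwins G x y → x ≠ y → MaxDistant G x y := by
    intro x y h hxy w hxw
    have hadj : G.Adj x y := ((h y).2 (Or.inr rfl)).resolve_right hxy
    rw [edist_eq_one_iff_adj.2 hadj]
    exact edist_le_one_iff_adj_or_eq.2 ((h w).1 (Or.inl hxw))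
  exact ⟨key h huv, key (fun w => (h w).symm) huv.symm⟩

/-- The sets containing an end of every edge of the strong resolving graph `G_SR`. -/
def CoversMMD (G : SimpleGraph α) (T : Set α) : Prop :=
  ∀ ⦃u v⦄, u ≠ v → MMD G u v → u ∈ T ∨ v ∈ T

lemma CoversMMD.mono {T T' : Set α} (h : CoversMMD G T) (hTT' : T ⊆ T') : CoversMMD G T' :=
  fun _ _ huv hmmd => (h huv hmmd).imp (@hTT' _) (@hTT' _)

end MMD

section Connected

variable {G : SimpleGraph α} {u v w : α}

lemma maxDistant_iff_dist (hG : G.Connected) :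
    MaxDistant G u v ↔ ∀ w, G.Adj u w → G.dist v w ≤ G.dist u v := by
  refine forall₂_congr fun w _ => ?_
  rw [← (hG.preconnected v w).coe_dist_eq_edist, ← (hG.preconnected u v).coe_dist_eq_edist,
    Nat.cast_le]

lemma stronglyResolves_iff_dist (hG : G.Connected) :
    StronglyResolves G w u v ↔
      G.dist w u = G.dist w v + G.dist v u ∨ G.dist w v = G.dist w u + G.dist u v := by
  simp only [StronglyResolves, ← (hG.preconnected _ _).coe_dist_eq_edist]
  norm_cast

lemma MaxDistant.dist_lt_add (hG : G.Connected) (h : MaxDistant G v u) (hw : w ≠ v) :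
    G.dist u w < G.dist u v + G.dist v w := by
  obtain ⟨z, hvz, hzw⟩ := hG.exists_adj_dist_lt hw.symm
  have huz := (maxDistant_iff_dist hG).1 h z hvz
  have htri : G.dist u w ≤ G.dist u z + G.dist z w := hG.dist_triangle
  grind [SimpleGraph.dist_comm]

lemma MMD.eq_or_eq_of_stronglyResolves (hG : G.Connected) (h : MMD G u v)
    (hw : StronglyResolves G w u v) : w = u ∨ w = v := by
  by_contra! hne
  have hu := h.1.dist_lt_add hG hne.1
  have hv := h.2.dist_lt_add hG hne.2
  rw [stronglyResolves_iff_dist hG] at hw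
  grind [SimpleGraph.dist_comm]

lemma exists_maxDistant_dist_eq_add [Fintype α] (hG : G.Connected) (u v : α) :
    ∃ x, MaxDistant G x v ∧ G.dist v x = G.dist v u + G.dist u x := by
  classical
  obtain ⟨x, hx, hmax⟩ := (univ.filter fun x => G.dist v x = G.dist v u + G.dist u x)
    |>.exists_max_image (G.dist v) ⟨u, by simp⟩
  rw [mem_filter] at hx
  refine ⟨x, (maxDistant_iff_dist hG).2 fun y hxy => ?_, hx.2⟩
  -- a neighbour `y` of `x` farther from `v` would extend the geodesic from `v` through `u`
  by_contra! hlt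
  have hxy' : G.dist x y = 1 := dist_eq_one_iff_adj.2 hxy
  have h₁ : G.dist v y ≤ G.dist v x + G.dist x y := hG.dist_triangle
  have h₂ : G.dist u y ≤ G.dist u x + G.dist x y := hG.dist_triangle
  have h₃ : G.dist v y ≤ G.dist v u + G.dist u y := hG.dist_triangle
  have hy := hmax y (by simp only [mem_filter, mem_univ, true_and]; grind [SimpleGraph.dist_comm])
  grind [SimpleGraph.dist_comm]

lemma exists_mmd_stronglyResolves [Fintype α] (hG : G.Connected) (huv : u ≠ v) :
    ∃ x y, x ≠ y ∧ MMD G x y ∧ StronglyResolves G x u v ∧ StronglyResolves G y u v := by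
  -- `u` lies on a geodesic from `v` to `x`, and `v` on one from `x` to `y`
  obtain ⟨x, hx, hvx⟩ := exists_maxDistant_dist_eq_add hG u v
  obtain ⟨y, hy, hxy⟩ := exists_maxDistant_dist_eq_add hG v x
  have huv' : 0 < G.dist u v := hG.pos_dist_of_ne huv
  have h₁ : G.dist y x ≤ G.dist y u + G.dist u x := hG.dist_triangle
  have h₂ : G.dist y u ≤ G.dist y v + G.dist v u := hG.dist_triangle
  have hxy' : x ≠ y := by
    rintro rfl
    grind [SimpleGraph.dist_comm]
  refine ⟨x, y, hxy', ⟨(maxDistant_iff_dist hG).2 fun z hxz => ?_, hy⟩,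
    (stronglyResolves_iff_dist hG).2 ?_, (stronglyResolves_iff_dist hG).2 ?_⟩
  · have h₃ := (maxDistant_iff_dist hG).1 hx z hxz
    have h₄ : G.dist y z ≤ G.dist y v + G.dist v z := hG.dist_triangle
    grind [SimpleGraph.dist_comm]
  all_goals grind [SimpleGraph.dist_comm]

lemma isStrongGenerator_iff_coversMMD [Fintype α] (hG : G.Connected) (S : Finset α) :
    IsStrongGenerator G S ↔ CoversMMD G S := by
  constructor
  · intro h u v huv hmmd
    obtain ⟨w, hwS, hw⟩ := h u v huv
    rcases hmmd.eq_or_eq_of_stronglyResolves hG hw with rfl | rfl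
    · exact Or.inl hwS
    · exact Or.inr hwS
  · intro h u v huv
    obtain ⟨x, y, hxy, hmmd, hx, hy⟩ := exists_mmd_stronglyResolves hG huv
    rcases h hxy hmmd with hxS | hyS
    · exact ⟨x, hxS, hx⟩
    · exact ⟨y, hyS, hy⟩

end Connected

section LexProd

variable {G : SimpleGraph α}

lemma edist_lexProd_of_fst_ne {H : SimpleGraph β} {p q : α × β} (h : p.1 ≠ q.1) :
    (lexProd G H).edist p q = G.edist p.1 q.1 := by
  classical
  refine le_antisymm ?_ (edist_map_le Prod.fst (fun x y (hxy : (lexProd G H).Adj x y) =>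
    edist_le_one_iff_adj_or_eq.2 (hxy.imp_right And.left)) p q)
  -- Any section of `Prod.fst` is a homomorphism `G →g lexProd G H`; take one through `p` and `q`.
  let s : α → α × β := fun x => if x = p.1 then p else (x, q.2)
  have hs : ∀ x, (s x).1 = x := fun x => by by_cases hx : x = p.1 <;> simp [s, hx]
  have hmap := edist_map_le (G' := lexProd G H) s (fun x y hxy =>
    (edist_eq_one_iff_adj.2 (Or.inl (by rwa [hs, hs]))).le) p.1 q.1
  simpa [s, Ne.symm h] using hmap

lemma edist_lexProd_top_le_one {p q : α × β} (h : p.1 = q.1) :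
    (lexProd G (⊤ : SimpleGraph β)).edist p q ≤ 1 := by
  refine edist_le_one_iff_adj_or_eq.2 (or_iff_not_imp_right.2 fun hpq => Or.inr ⟨h, ?_⟩)
  exact fun h₂ => hpq (Prod.ext h h₂)

lemma trueTwins_lexProd_top (a : α) (b d : β) :
    TrueTwins (lexProd G (⊤ : SimpleGraph β)) (a, b) (a, d) := by
  rintro ⟨c, x⟩
  simp only [lexProd, top_adj, Prod.mk.injEq]
  tauto

lemma maxDistant_lexProd_top_iff {p q : α × β} (h : p.1 ≠ q.1) :
    MaxDistant (lexProd G ⊤) p q ↔ MaxDistant G p.1 q.1 := by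
  constructor
  · intro hmd w hw
    by_cases hwq : q.1 = w
    · simp [hwq]
    have := hmd (w, q.2) (Or.inl hw)
    rwa [edist_lexProd_of_fst_ne hwq, edist_lexProd_of_fst_ne h] at this
  · intro hmd r hr
    rw [edist_lexProd_of_fst_ne h]
    by_cases hqr : q.1 = r.1
    · exact (edist_lexProd_top_le_one hqr).trans
        (Order.one_le_iff_pos.2 (edist_pos_of_ne h))
    rw [edist_lexProd_of_fst_ne hqr]
    rcases hr with hr | ⟨hpr, -⟩
    · exact hmd _ hr
    · rw [← hpr, edist_comm]

lemma mmd_lexProd_top_iff {p q : α × β} (hpq : p ≠ q) :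
    MMD (lexProd G ⊤) p q ↔ p.1 = q.1 ∨ MMD G p.1 q.1 := by
  by_cases h : p.1 = q.1
  · refine iff_of_true ?_ (Or.inl h)
    obtain ⟨a, b⟩ := p
    obtain ⟨c, d⟩ := q
    obtain rfl : a = c := h
    exact (trueTwins_lexProd_top a b d).mmd hpq
  · simp only [MMD, h, false_or]
    exact and_congr (maxDistant_lexProd_top_iff h) (maxDistant_lexProd_top_iff (Ne.symm h))

lemma boundary_lexProd_top [Nontrivial β] :
    boundary (lexProd G (⊤ : SimpleGraph β)) = Set.univ := by
  refine Set.eq_univ_of_forall fun ⟨a, b⟩ => ?_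
  obtain ⟨d, hd⟩ := exists_ne b
  have hne : (a, b) ≠ (a, d) := by simp [hd.symm]
  exact ⟨(a, d), hne, (mmd_lexProd_top_iff hne).2 (Or.inl rfl)⟩

lemma connected_lexProd_top [Nonempty β] (hG : G.Connected) :
    (lexProd G (⊤ : SimpleGraph β)).Connected := by
  have := hG.nonempty
  refine ⟨fun p q => reachable_of_edist_ne_top ?_⟩
  by_cases h : p.1 = q.1
  · exact ((edist_lexProd_top_le_one h).trans_lt ENat.one_lt_top).ne
  · rw [edist_lexProd_of_fst_ne h]
    exact edist_ne_top_iff_reachable.2 (hG.preconnected _ _)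

lemma coversMMD_lexProd_top_iff (S : Set (α × β)) :
    CoversMMD (lexProd G ⊤) S ↔
      Sᶜ.InjOn Prod.fst ∧ CoversMMD G {a | ∀ b, (a, b) ∈ S} := by
  constructor
  · intro h
    refine ⟨fun p hp q hq hpq => ?_, fun a c hac hmmd => ?_⟩
    · by_contra hne
      exact (h hne ((mmd_lexProd_top_iff hne).2 (Or.inl hpq))).elim hp hq
    · by_contra! hS
      simp only [Set.mem_ofPred_eq, not_forall] at hS
      obtain ⟨⟨b, hb⟩, d, hd⟩ := hS
      have hne : (a, b) ≠ (c, d) := fun h' => hac (congrArg Prod.fst h')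
      exact (h hne ((mmd_lexProd_top_iff hne).2 (Or.inr hmmd))).elim hb hd
  · rintro ⟨hinj, hcov⟩ p q hpq hmmd
    rcases (mmd_lexProd_top_iff hpq).1 hmmd with h | h
    · by_contra! hS
      exact hpq (hinj hS.1 hS.2 h)
    · by_cases hfst : p.1 = q.1
      · by_contra! hS
        exact hpq (hinj hS.1 hS.2 hfst)
      · exact (hcov hfst h).imp (· p.2) (· q.2)

lemma srGraph_lexProd_top_adj_iff {x y : boundary (lexProd G (⊤ : SimpleGraph β))} :
    (srGraph (lexProd G ⊤)).Adj x y ↔ x.1 ≠ y.1 ∧ (x.1.1 = y.1.1 ∨ MMD G x.1.1 y.1.1) :=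
  and_congr_right mmd_lexProd_top_iff

end LexProd

section Counting

variable [Fintype α] [Fintype β] [DecidableEq α] [DecidableEq β]

lemma card_mul_sub_one_add_card_le [Nonempty β] {S : Finset (α × β)} {T : Finset α}
    (hS : (S : Set (α × β))ᶜ.InjOn Prod.fst) (hT : ∀ a ∈ T, ∀ b, (a, b) ∈ S) :
    Fintype.card α * (Fintype.card β - 1) + T.card ≤ S.card := by
  have hcompl : Sᶜ.card ≤ Tᶜ.card := card_le_card_of_injOn Prod.fst
    (fun p hp => by
      simp only [coe_compl, Set.mem_compl_iff, mem_coe] at hp ⊢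
      exact fun hpT => hp (hT _ hpT _)) (by rwa [coe_compl])
  rw [card_compl, card_compl, Fintype.card_prod] at hcompl
  have hS := S.card_le_univ
  have hT := T.card_le_univ
  rw [Fintype.card_prod] at hS
  rw [Nat.mul_sub_one]
  have := Nat.le_mul_of_pos_right (Fintype.card α) (Fintype.card_pos (α := β))
  omega

lemma exists_card_eq_mul_sub_one_add_card [Nonempty β] (T : Finset α) :
    ∃ S : Finset (α × β), (S : Set (α × β))ᶜ.InjOn Prod.fst ∧
      (∀ a ∈ T, ∀ b, (a, b) ∈ S) ∧
      S.card = Fintype.card α * (Fintype.card β - 1) + T.card := by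
  obtain ⟨b₀⟩ := ‹Nonempty β›
  refine ⟨(Tᶜ ×ˢ {b₀})ᶜ, fun p hp q hq hpq => ?_, fun a ha b => by simp [ha], ?_⟩
  · simp only [← coe_compl, compl_compl, coe_product, coe_singleton, Set.mem_prod,
      Set.mem_singleton_iff] at hp hq
    exact Prod.ext hpq (hp.2.trans hq.2.symm)
  · rw [card_compl, card_product, card_singleton, card_compl, Fintype.card_prod, Nat.mul_sub_one]
    have := T.card_le_univ
    have := Nat.le_mul_of_pos_right (Fintype.card α) (Fintype.card_pos (α := β))
    omega

end Counting

lemma _root_.Nat.sInf_eq_add_sInf {A B : Set ℕ} (c : ℕ) (hB : B.Nonempty)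
    (hAB : ∀ a ∈ A, ∃ b ∈ B, c + b ≤ a) (hBA : ∀ b ∈ B, c + b ∈ A) :
    sInf A = c + sInf B := by
  have hA : (sInf A) ∈ A := Nat.sInf_mem ⟨_, hBA _ hB.some_mem⟩
  obtain ⟨b, hb, hba⟩ := hAB _ hA
  exact le_antisymm (Nat.sInf_le (hBA _ (Nat.sInf_mem hB)))
    ((Nat.add_le_add_left (Nat.sInf_le hb) c).trans hba)

theorem sdim_lexProd_top [Fintype α] [Fintype β] [Nonempty β] {G : SimpleGraph α}
    (hG : G.Connected) :
    sdim (lexProd G (⊤ : SimpleGraph β)) = Fintype.card α * (Fintype.card β - 1) + sdim G := by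
  classical
  have hGK := connected_lexProd_top (β := β) hG
  refine Nat.sInf_eq_add_sInf _ ⟨_, univ, ?_, rfl⟩ ?_ ?_
  · exact (isStrongGenerator_iff_coversMMD hG _).2 fun u _ _ _ => Or.inl (mem_univ u)
  · rintro _ ⟨S, hS, rfl⟩
    rw [isStrongGenerator_iff_coversMMD hGK, coversMMD_lexProd_top_iff] at hS
    refine ⟨_, ⟨univ.filter fun a => ∀ b, (a, b) ∈ S, ?_, rfl⟩, ?_⟩
    · rw [isStrongGenerator_iff_coversMMD hG]
      simpa using hS.2
    · exact card_mul_sub_one_add_card_le hS.1 (by simp)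
  · rintro _ ⟨T, hT, rfl⟩
    obtain ⟨S, hS, hTS, hcard⟩ := exists_card_eq_mul_sub_one_add_card (β := β) T
    refine ⟨S, (isStrongGenerator_iff_coversMMD hGK S).2 ?_, hcard⟩
    exact (coversMMD_lexProd_top_iff _).2
      ⟨hS, ((isStrongGenerator_iff_coversMMD hG T).1 hT).mono hTS⟩

section Isomorphism

variable {G : SimpleGraph α} [Nontrivial β] {k : ℕ}

open scoped Classical in
variable (G) in
/-- Every vertex of `G ∘ K` is a boundary vertex; sort them by whether their projection is. -/
noncomputable def lexProdTopBoundaryEquiv (e : ↥(boundary G)ᶜ ≃ Fin k) :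
    boundary G × β ⊕ Fin k × β ≃ boundary (lexProd G (⊤ : SimpleGraph β)) :=
  ((Equiv.refl _).sumCongr (e.symm.prodCongr (Equiv.refl β))).trans <|
    (Equiv.sumProdDistrib _ _ _).symm.trans <|
      ((Equiv.Set.sumCompl (boundary G)).prodCongr (Equiv.refl β)).trans <|
        (Equiv.subtypeUnivEquiv fun p =>
          boundary_lexProd_top (G := G) (β := β) ▸ Set.mem_univ p).symm

@[simp]
lemma lexProdTopBoundaryEquiv_inl (e : ↥(boundary G)ᶜ ≃ Fin k) (a : boundary G) (b : β) :
    (lexProdTopBoundaryEquiv G e (Sum.inl (a, b))).1 = (a.1, b) :=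
  rfl

@[simp]
lemma lexProdTopBoundaryEquiv_inr (e : ↥(boundary G)ᶜ ≃ Fin k) (i : Fin k) (b : β) :
    (lexProdTopBoundaryEquiv G e (Sum.inr (i, b))).1 = ((e.symm i).1, b) :=
  rfl

variable (G) in
noncomputable def lexProdTopSrGraphIso (e : ↥(boundary G)ᶜ ≃ Fin k) :
    disjUnion (lexProd (srGraph G) (⊤ : SimpleGraph β)) (copies k (⊤ : SimpleGraph β)) ≃g
      srGraph (lexProd G (⊤ : SimpleGraph β)) where
  toEquiv := lexProdTopBoundaryEquiv G e
  map_rel_iff' {x y} := by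
    rw [srGraph_lexProd_top_adj_iff]
    rcases x with ⟨⟨a, ha⟩, b⟩ | ⟨i, b⟩ <;> rcases y with ⟨⟨c, hc⟩, d⟩ | ⟨j, d⟩
    all_goals simp only [lexProdTopBoundaryEquiv_inl, lexProdTopBoundaryEquiv_inr]
    · by_cases hac : a = c <;> simp [hac, disjUnion, lexProd, srGraph]
    · have hac : a ≠ (e.symm j).1 := fun h => (e.symm j).2 (h ▸ ha)
      refine iff_of_false ?_ id
      rintro ⟨-, h | h⟩
      exacts [hac h, (e.symm j).2 (h.symm.mem_boundary hac.symm)]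
    · have hic : (e.symm i).1 ≠ c := fun h => (e.symm i).2 (h ▸ hc)
      refine iff_of_false ?_ id
      rintro ⟨-, h | h⟩
      exacts [hic h, (e.symm i).2 (h.mem_boundary hic)]
    · by_cases hij : i = j
      · simp [hij, disjUnion, copies]
      · have hij' : (e.symm i).1 ≠ (e.symm j).1 :=
          fun h => hij (e.symm.injective (Subtype.ext h))
        have hmmd : ¬ MMD G (e.symm i).1 (e.symm j).1 :=
          fun h => (e.symm i).2 (h.mem_boundary hij')
        simp [hij, hij', hmmd, disjUnion, copies]

theorem nonempty_srGraph_lexProd_top_iso [Fintype α] :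
    Nonempty (srGraph (lexProd G (⊤ : SimpleGraph β)) ≃g
      disjUnion (lexProd (srGraph G) (⊤ : SimpleGraph β))
        (copies (Fintype.card α - Nat.card (boundary G)) (⊤ : SimpleGraph β))) := by
  have hk : Nat.card ↥(boundary G)ᶜ = Fintype.card α - Nat.card (boundary G) := by
    rw [Nat.card_coe_set_eq, Set.ncard_compl, Nat.card_coe_set_eq, Nat.card_eq_fintype_card]
  exact ⟨(lexProdTopSrGraphIso G ((Finite.equivFin _).trans (finCongr hk))).symm⟩

end Isomorphism

theorem stmt_17_general [Fintype α] (G : SimpleGraph α) (hG : G.Connected)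
    (n' : ℕ) (hn' : 2 ≤ n') :
    Nonempty (srGraph (lexProd G (⊤ : SimpleGraph (Fin n'))) ≃g
      disjUnion (lexProd (srGraph G) (⊤ : SimpleGraph (Fin n')))
        (copies (Fintype.card α - Nat.card (boundary G)) (⊤ : SimpleGraph (Fin n')))) ∧
    sdim (lexProd G (⊤ : SimpleGraph (Fin n'))) =
      Fintype.card α * (n' - 1) + sdim G := by
  have : Nontrivial (Fin n') := Fin.nontrivial_iff_two_le.2 hn'
  refine ⟨nonempty_srGraph_lexProd_top_iso, ?_⟩
  simpa using sdim_lexProd_top (β := Fin n') hG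

theorem stmt_17 [Fintype α] (G : SimpleGraph α) (hG : G.Connected)
    (hn : 2 ≤ Fintype.card α) (n' : ℕ) (hn' : 2 ≤ n') :
    Nonempty (srGraph (lexProd G (⊤ : SimpleGraph (Fin n'))) ≃g
      disjUnion (lexProd (srGraph G) (⊤ : SimpleGraph (Fin n')))
        (copies (Fintype.card α - Nat.card (boundary G)) (⊤ : SimpleGraph (Fin n')))) ∧
    sdim (lexProd G (⊤ : SimpleGraph (Fin n'))) =
      Fintype.card α * (n' - 1) + sdim G :=
  stmt_17_general G hG n' hn'

end Paper
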